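/- Fix 1 ≤ i ≤ n, a regime sequence a_i,…,a_n ∈ {1,…,J} and observations y_i,…,y_n ∈ ℝ^p. Define ψ_u : ℝ^m → ℝ backward by ψ_n(z) := g(a_n,z;y_n) and, for i ≤ u < n, ψ_u(z) := g(a_u,z;y_u) ∫_{ℝ^m} m(a_{u+1},z;w) ψ_{u+1}(w) dw. Define Ω̂_n := B_{a_n}'Ḡ_{a_n}⁻¹B_{a_n}, λ̂_n := B_{a_n}'Ḡ_{a_n}⁻¹(y_n−c_{a_n}) and, backward for i ≤ u < n: M_{u+1} := H_{a_{u+1}}'Ω̂_{u+1}H_{a_{u+1}} + I_m, m_{u+1} := λ̂_{u+1} − Ω̂_{u+1}d_{a_{u+1}}, Ω_u := T_{a_{u+1}}'(I_m − Ω̂_{u+1}H_{a_{u+1}}M_{u+1}⁻¹H_{a_{u+1}}')Ω̂_{u+1}T_{a_{u+1}}, λ_u := T_{a_{u+1}}'(I_m − Ω̂_{u+1}H_{a_{u+1}}M_{u+1}⁻¹H_{a_{u+1}}')m_{u+1}, Ω̂_u := Ω_u + B_{a_u}'Ḡ_{a_u}⁻¹B_{a_u}, λ̂_u := λ_u + B_{a_u}'Ḡ_{a_u}⁻¹(y_u−c_{a_u}).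 Then each Ω̂_u is positive semidefinite and, for every i ≤ u ≤ n, there exists a constant C_u > 0 such that ψ_u(z) = C_u exp(−½ z'Ω̂_u z + λ̂_u'z) for all z ∈ ℝ^m. -/

import Mathlib

open MeasureTheory Matrix Real

/-- Gaussian density on `ℝ^k` with mean `μ` and covariance `S`. -/
noncomputable def gaussPdf {k : ℕ} (μ : Fin k → ℝ) (S : Matrix (Fin k) (Fin k) ℝ)
    (x : Fin k → ℝ) : ℝ :=
  ((2 * π) ^ (k : ℝ) * S.det) ^ (-(1 : ℝ) / 2) *
    Real.exp (-(1 / 2 : ℝ) * ((x - μ) ⬝ᵥ (S⁻¹ *ᵥ (x - μ))))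

/-- State transition density `m(a,z';z) = φ_{d_a + T_a z', H_a H_a'}(z)`. -/
noncomputable def mKer {m J : ℕ} (dv : Fin J → Fin m → ℝ)
    (T H : Fin J → Matrix (Fin m) (Fin m) ℝ) (a : Fin J) (z w : Fin m → ℝ) : ℝ :=
  gaussPdf (dv a + T a *ᵥ z) (H a * (H a)ᵀ) w

/-- Observation density `g(a,z;y) = φ_{c_a + B_a z, G_a G_a'}(y)`. -/
noncomputable def gObs {m p J : ℕ} (cv : Fin J → Fin p → ℝ)
    (B : Fin J → Matrix (Fin p) (Fin m) ℝ) (G : Fin J → Matrix (Fin p) (Fin p) ℝ)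
    (a : Fin J) (z : Fin m → ℝ) (y : Fin p → ℝ) : ℝ :=
  gaussPdf (cv a + B a *ᵥ z) (G a * (G a)ᵀ) y

/-- Backward likelihood `ψ_u(z)`, indexed by the number of backward steps `k = n - u`:
`ψ_n(z) = g(a_n,z;y_n)` and `ψ_u(z) = g(a_u,z;y_u) ∫ m(a_{u+1},z;w) ψ_{u+1}(w) dw`. -/
noncomputable def backDens {m p J : ℕ} (dv : Fin J → Fin m → ℝ)
    (T H : Fin J → Matrix (Fin m) (Fin m) ℝ) (cv : Fin J → Fin p → ℝ)
    (B : Fin J → Matrix (Fin p) (Fin m) ℝ) (G : Fin J → Matrix (Fin p) (Fin p) ℝ)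
    (a : ℕ → Fin J) (y : ℕ → Fin p → ℝ) (n : ℕ) : ℕ → (Fin m → ℝ) → ℝ
  | 0 => fun z => gObs cv B G (a n) z (y n)
  | (k + 1) => fun z =>
      gObs cv B G (a (n - (k + 1))) z (y (n - (k + 1))) *
        ∫ w : Fin m → ℝ, mKer dv T H (a (n - k)) z w * backDens dv T H cv B G a y n k w

/-- FFBS backward recursion: at backward step `k = n - u` this returns `(Ω̂_u, λ̂_u)`. -/
noncomputable def ffbsCoef {m p J : ℕ} (dv : Fin J → Fin m → ℝ)
    (T H : Fin J → Matrix (Fin m) (Fin m) ℝ) (cv : Fin J → Fin p → ℝ)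
    (B : Fin J → Matrix (Fin p) (Fin m) ℝ) (G : Fin J → Matrix (Fin p) (Fin p) ℝ)
    (a : ℕ → Fin J) (y : ℕ → Fin p → ℝ) (n : ℕ) :
    ℕ → Matrix (Fin m) (Fin m) ℝ × (Fin m → ℝ)
  | 0 =>
      ((B (a n))ᵀ * (G (a n) * (G (a n))ᵀ)⁻¹ * B (a n),
        ((B (a n))ᵀ * (G (a n) * (G (a n))ᵀ)⁻¹) *ᵥ (y n - cv (a n)))
  | (k + 1) =>
      let prev := ffbsCoef dv T H cv B G a y n k
      let j := a (n - k)  -- this is `a_{u+1}` for `u = n - (k+1)`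
      let M := (H j)ᵀ * prev.1 * H j + 1
      let mv := prev.2 - prev.1 *ᵥ dv j
      let F := 1 - prev.1 * H j * M⁻¹ * (H j)ᵀ
      let Ωu := (T j)ᵀ * F * prev.1 * T j
      let lamu := (T j)ᵀ *ᵥ (F *ᵥ mv)
      let u := n - (k + 1)
      let Gb := G (a u) * (G (a u))ᵀ
      (Ωu + (B (a u))ᵀ * Gb⁻¹ * B (a u),
        lamu + ((B (a u))ᵀ * Gb⁻¹) *ᵥ (y u - cv (a u)))

/-!
By backward induction, `ψ_u` is a positive multiple of `exp (-½ z'Ω̂_u z + λ̂_u'z)`. The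
observation density `g(a, z; y)` already has this form in `z`. Multiplying the transition density
`φ_{d + Tz, H̄}(w)` by such a function of `w` gives a Gaussian in `w` with precision
`A = H̄⁻¹ + Ω̂`; integrating out `w` leaves a positive constant times the exponential of a
quadratic in the mean `d + Tz`, with precision `H̄⁻¹ - H̄⁻¹ A⁻¹ H̄⁻¹`. That matrix is a Schur
complement, hence positive semidefinite, and the Woodbury identity turns `H̄⁻¹ A⁻¹` into the
recursion's `I - Ω̂ H M⁻¹ H'`.
-/

section Matrices

variable {ι κ : Type*} [Fintype ι] [Fintype κ]

theorem Matrix.IsSymm.mulVec_dotProduct {K : Matrix ι ι ℝ} (hK : K.IsSymm) (x y : ι → ℝ) :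
    (K *ᵥ x) ⬝ᵥ y = x ⬝ᵥ K *ᵥ y := by
  rw [dotProduct_mulVec, ← mulVec_transpose, hK.eq]

theorem Matrix.PosSemidef.transpose_mul_mul_same {A : Matrix ι ι ℝ} (hA : A.PosSemidef)
    (B : Matrix ι κ ℝ) : (Bᵀ * A * B).PosSemidef := by
  simpa only [conjTranspose_eq_transpose_of_trivial] using hA.conjTranspose_mul_mul_same B

variable [DecidableEq ι]

theorem Matrix.posDef_mul_transpose_self {H : Matrix ι ι ℝ} (hH : IsUnit H.det) :
    (H * Hᵀ).PosDef := by
  rw [← conjTranspose_eq_transpose_of_trivial]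
  exact .mul_conjTranspose_self H (vecMul_injective_of_isUnit ((isUnit_iff_isUnit_det H).mpr hH))

theorem Matrix.PosSemidef.posDef_transpose_mul_mul_add_one {Ω : Matrix ι ι ℝ}
    (hΩ : Ω.PosSemidef) (H : Matrix ι ι ℝ) : (Hᵀ * Ω * H + 1).PosDef :=
  .posSemidef_add (hΩ.transpose_mul_mul_same H) .one

theorem Matrix.mul_inv_add_mul_eq_sub {Q Ω : Matrix ι ι ℝ} (h : IsUnit (Q + Ω).det) :
    Q * (Q + Ω)⁻¹ * Ω = Q - Q * (Q + Ω)⁻¹ * Q := by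
  calc Q * (Q + Ω)⁻¹ * Ω = Q * ((Q + Ω)⁻¹ * (Q + Ω)) - Q * (Q + Ω)⁻¹ * Q := by noncomm_ring
    _ = Q - Q * (Q + Ω)⁻¹ * Q := by rw [nonsing_inv_mul _ h, mul_one]

theorem Matrix.PosDef.posSemidef_mul_inv_add_mul {Q Ω : Matrix ι ι ℝ} (hQ : Q.PosDef)
    (hΩ : Ω.PosSemidef) : (Q * (Q + Ω)⁻¹ * Ω).PosSemidef := by
  have hQΩ : (Q + Ω).PosDef := hQ.add_posSemidef hΩ
  have hQh : Qᴴ = Q := hQ.isHermitian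
  let := hQ.isUnit.invertible
  let := hQΩ.isUnit.invertible
  -- The two Schur complements of `fromBlocks (Q + Ω) Q Q Q` are `Ω` and `Q - Q (Q + Ω)⁻¹ Q`.
  have hblocks : (fromBlocks (Q + Ω) Q Qᴴ Q).PosSemidef := by
    rw [PosDef.fromBlocks₂₂ _ _ hQ, hQh, mul_assoc, nonsing_inv_mul _ hQ.det_pos.ne'.isUnit,
      mul_one, add_sub_cancel_left]
    exact hΩ
  rwa [PosDef.fromBlocks₁₁ _ _ hQΩ, hQh, ← mul_inv_add_mul_eq_sub hQΩ.det_pos.ne'.isUnit]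
    at hblocks

/-- Woodbury: with `H̄ = H H'`, the factor `I - Ω H (H'ΩH + I)⁻¹ H'` of the backward recursion is
`H̄⁻¹ (H̄⁻¹ + Ω)⁻¹`. -/
theorem Matrix.mul_transpose_inv_mul_inv_add_eq {H Ω : Matrix ι ι ℝ} (hH : IsUnit H.det)
    (hΩ : Ω.PosSemidef) :
    (H * Hᵀ)⁻¹ * ((H * Hᵀ)⁻¹ + Ω)⁻¹ = 1 - Ω * H * (Hᵀ * Ω * H + 1)⁻¹ * Hᵀ := by
  have hM : IsUnit (1⁻¹ + Hᵀ * 1⁻¹ * (Ω * H)) := by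
    rw [inv_one, mul_one, ← mul_assoc, add_comm]
    exact (hΩ.posDef_transpose_mul_mul_add_one H).isUnit
  calc (H * Hᵀ)⁻¹ * ((H * Hᵀ)⁻¹ + Ω)⁻¹ = (((H * Hᵀ)⁻¹ + Ω) * (H * Hᵀ))⁻¹ :=
        (mul_inv_rev _ _).symm
    _ = (1 + Ω * H * 1 * Hᵀ)⁻¹ := by
        rw [add_mul, nonsing_inv_mul _ (posDef_mul_transpose_self hH).det_pos.ne'.isUnit,
          mul_one, mul_assoc Ω]
    _ = 1 - Ω * H * (Hᵀ * Ω * H + 1)⁻¹ * Hᵀ := by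
        rw [add_mul_mul_inv_eq_sub _ _ _ _ isUnit_one isUnit_one hM]
        simp only [inv_one, mul_one, one_mul, ← mul_assoc, add_comm]

open scoped MatrixOrder in
theorem Matrix.PosDef.exists_eq_transpose_mul_self {A : Matrix ι ι ℝ} (hA : A.PosDef) :
    ∃ L : Matrix ι ι ℝ, L.det ≠ 0 ∧ A = Lᵀ * L := by
  have hsqrt : A = (CFC.sqrt A)ᵀ * CFC.sqrt A := by
    rw [← conjTranspose_eq_transpose_of_trivial, ← star_eq_conjTranspose,
      (CFC.sqrt_nonneg A).isSelfAdjoint.star_eq, CFC.sqrt_mul_sqrt_self A hA.posSemidef.nonneg]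
  refine ⟨CFC.sqrt A, fun h => hA.det_pos.ne' ?_, hsqrt⟩
  rw [hsqrt, det_mul, det_transpose, h, mul_zero]

end Matrices

noncomputable def quadExp {ι : Type*} [Fintype ι] (K : Matrix ι ι ℝ) (ℓ x : ι → ℝ) : ℝ :=
  Real.exp (-(1 / 2 : ℝ) * (x ⬝ᵥ (K *ᵥ x)) + ℓ ⬝ᵥ x)

section QuadExp

variable {ι κ : Type*} [Fintype ι] [Fintype κ]

theorem quadExp_pos (K : Matrix ι ι ℝ) (ℓ x : ι → ℝ) : 0 < quadExp K ℓ x := Real.exp_pos _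

theorem quadExp_mul_quadExp (K K' : Matrix ι ι ℝ) (ℓ ℓ' x : ι → ℝ) :
    quadExp K ℓ x * quadExp K' ℓ' x = quadExp (K + K') (ℓ + ℓ') x := by
  simp only [quadExp, ← Real.exp_add, add_mulVec, dotProduct_add, add_dotProduct]
  ring_nf

theorem quadExp_add_mulVec {K : Matrix ι ι ℝ} (hK : K.IsSymm) (ℓ d : ι → ℝ)
    (T : Matrix ι κ ℝ) (z : κ → ℝ) :
    quadExp K ℓ (d + T *ᵥ z) = quadExp K ℓ d * quadExp (Tᵀ * K * T) (Tᵀ *ᵥ (ℓ - K *ᵥ d)) z := by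
  have hquad : z ⬝ᵥ (Tᵀ * K * T) *ᵥ z = (T *ᵥ z) ⬝ᵥ K *ᵥ (T *ᵥ z) := by
    rw [← mulVec_mulVec, ← mulVec_mulVec, dotProduct_mulVec, vecMul_transpose]
  have hlin : (Tᵀ *ᵥ (ℓ - K *ᵥ d)) ⬝ᵥ z = ℓ ⬝ᵥ T *ᵥ z - d ⬝ᵥ K *ᵥ (T *ᵥ z) := by
    rw [mulVec_transpose, ← dotProduct_mulVec, sub_dotProduct, hK.mulVec_dotProduct]
  have hcross : (T *ᵥ z) ⬝ᵥ K *ᵥ d = d ⬝ᵥ K *ᵥ (T *ᵥ z) := by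
    rw [← hK.mulVec_dotProduct, dotProduct_comm]
  simp only [quadExp, ← Real.exp_add, hquad, hlin, mulVec_add, dotProduct_add, add_dotProduct,
    hcross]
  ring_nf

theorem quadExp_add {K : Matrix ι ι ℝ} (hK : K.IsSymm) (ℓ d x : ι → ℝ) :
    quadExp K ℓ (d + x) = quadExp K ℓ d * quadExp K (ℓ - K *ᵥ d) x := by
  classical
  simpa using quadExp_add_mulVec hK ℓ d 1 x

theorem integrable_exp_neg_half_dotProduct_self :
    Integrable fun u : ι → ℝ => Real.exp (-(1 / 2 : ℝ) * (u ⬝ᵥ u)) := by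
  have h1 : Integrable fun x : ℝ => Real.exp (-(1 / 2 : ℝ) * x ^ 2) :=
    integrable_exp_neg_mul_sq (by norm_num)
  refine (Integrable.fintype_prod fun _ => h1).congr (Filter.Eventually.of_forall fun u => ?_)
  simp only [← Real.exp_sum, dotProduct, Finset.mul_sum, sq]

variable [DecidableEq ι]

theorem integrable_quadExp_zero {A : Matrix ι ι ℝ} (hA : A.PosDef) :
    Integrable (quadExp A 0) := by
  obtain ⟨L, hL, rfl⟩ := hA.exists_eq_transpose_mul_self
  have hmap : (volume : Measure (ι → ℝ)).map (toLin' L) = ENNReal.ofReal |L.det⁻¹| • volume :=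
    Real.map_matrix_volume_pi_eq_smul_volume_pi hL
  have hg := (integrable_exp_neg_half_dotProduct_self (ι := ι)).smul_measure
    (ENNReal.ofReal_ne_top (r := |L.det⁻¹|))
  rw [← hmap, integrable_map_measure (by fun_prop)
    (toLin' L).continuous_of_finiteDimensional.measurable.aemeasurable] at hg
  refine hg.congr (Filter.Eventually.of_forall fun v => ?_)
  simp only [Function.comp_apply, toLin'_apply, quadExp, zero_dotProduct, add_zero,
    ← mulVec_mulVec, dotProduct_mulVec _ Lᵀ, vecMul_transpose]

theorem integral_quadExp_zero_pos {A : Matrix ι ι ℝ} (hA : A.PosDef) :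
    0 < ∫ w, quadExp A 0 w :=
  integral_exp_pos (integrable_quadExp_zero hA)

theorem integral_quadExp {A : Matrix ι ι ℝ} (hA : A.PosDef) (b : ι → ℝ) :
    ∫ w, quadExp A b w = Real.exp ((1 / 2 : ℝ) * (b ⬝ᵥ A⁻¹ *ᵥ b)) * ∫ w, quadExp A 0 w := by
  have hsymm : A.IsSymm := isHermitian_iff_isSymm.mp hA.isHermitian
  have hcenter : A *ᵥ (A⁻¹ *ᵥ b) = b := by
    rw [mulVec_mulVec, mul_nonsing_inv _ hA.det_pos.ne'.isUnit, one_mulVec]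
  have hshift (w : ι → ℝ) : quadExp A b w =
      Real.exp ((1 / 2 : ℝ) * (b ⬝ᵥ A⁻¹ *ᵥ b)) * quadExp A 0 (w - A⁻¹ *ᵥ b) := by
    conv_lhs => rw [← add_sub_cancel (A⁻¹ *ᵥ b) w]
    rw [quadExp_add hsymm, hcenter, sub_self]
    simp only [quadExp, hcenter, dotProduct_comm (A⁻¹ *ᵥ b) b]
    ring_nf
  simp_rw [hshift]
  rw [integral_const_mul, integral_sub_right_eq_self (quadExp A 0)]

theorem integral_quadExp_sub_mul_quadExp {Q Ω : Matrix ι ι ℝ} (hQ : Q.IsSymm)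
    (hA : (Q + Ω).PosDef) (μ ℓ : ι → ℝ) :
    ∫ w, quadExp Q 0 (w - μ) * quadExp Ω ℓ w =
      Real.exp ((1 / 2 : ℝ) * (ℓ ⬝ᵥ (Q + Ω)⁻¹ *ᵥ ℓ)) * (∫ w, quadExp (Q + Ω) 0 w) *
        quadExp (Q * (Q + Ω)⁻¹ * Ω) ((Q * (Q + Ω)⁻¹) *ᵥ ℓ) μ := by
  have hP : ((Q + Ω)⁻¹).IsSymm := isHermitian_iff_isSymm.mp hA.inv.isHermitian
  have hproduct (w : ι → ℝ) : quadExp Q 0 (w - μ) * quadExp Ω ℓ w =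
      quadExp Q 0 μ * quadExp (Q + Ω) (Q *ᵥ μ + ℓ) w := by
    rw [sub_eq_neg_add, quadExp_add hQ, mul_assoc, quadExp_mul_quadExp]
    simp only [quadExp, zero_sub, mulVec_neg, neg_neg, dotProduct_neg, neg_dotProduct,
      zero_dotProduct, neg_zero]
  simp_rw [hproduct]
  rw [integral_const_mul, integral_quadExp hA, mul_inv_add_mul_eq_sub hA.det_pos.ne'.isUnit]
  set P := (Q + Ω)⁻¹
  have hquad : (Q *ᵥ μ) ⬝ᵥ P *ᵥ (Q *ᵥ μ) = μ ⬝ᵥ (Q * P * Q) *ᵥ μ := by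
    rw [hQ.mulVec_dotProduct, mulVec_mulVec, mulVec_mulVec]
  have hcross : (Q *ᵥ μ) ⬝ᵥ P *ᵥ ℓ = ((Q * P) *ᵥ ℓ) ⬝ᵥ μ := by
    rw [hQ.mulVec_dotProduct, dotProduct_comm, mulVec_mulVec]
  have hcross' : ℓ ⬝ᵥ P *ᵥ (Q *ᵥ μ) = ((Q * P) *ᵥ ℓ) ⬝ᵥ μ := by
    rw [← hP.mulVec_dotProduct, dotProduct_comm, hcross]
  have hexponent :
      quadExp Q 0 μ * Real.exp ((1 / 2 : ℝ) * ((Q *ᵥ μ + ℓ) ⬝ᵥ P *ᵥ (Q *ᵥ μ + ℓ))) =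
        Real.exp ((1 / 2 : ℝ) * (ℓ ⬝ᵥ P *ᵥ ℓ)) * quadExp (Q - Q * P * Q) ((Q * P) *ᵥ ℓ) μ := by
    simp only [quadExp, zero_dotProduct, add_zero, mulVec_add, dotProduct_add, add_dotProduct,
      sub_mulVec, dotProduct_sub, hquad, hcross, hcross', ← Real.exp_add]
    ring_nf
  linear_combination (∫ w, quadExp (Q + Ω) 0 w) * hexponent

end QuadExp

def HasQuadExpForm {ι : Type*} [Fintype ι] (f : (ι → ℝ) → ℝ) (K : Matrix ι ι ℝ)
    (ℓ : ι → ℝ) : Prop :=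
  ∃ C : ℝ, 0 < C ∧ ∀ z, f z = C * quadExp K ℓ z

section HasQuadExpForm

variable {ι κ : Type*} [Fintype ι] [Fintype κ] {f g : (ι → ℝ) → ℝ} {K K' : Matrix ι ι ℝ}
  {ℓ ℓ' : ι → ℝ}

theorem HasQuadExpForm.mul (hf : HasQuadExpForm f K ℓ) (hg : HasQuadExpForm g K' ℓ') :
    HasQuadExpForm (fun z => f z * g z) (K + K') (ℓ + ℓ') := by
  obtain ⟨C, hC, hf⟩ := hf
  obtain ⟨C', hC', hg⟩ := hg
  refine ⟨C * C', mul_pos hC hC', fun z => ?_⟩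
  simp only [hf, hg, ← quadExp_mul_quadExp]
  ring

theorem HasQuadExpForm.comp_add_mulVec (hf : HasQuadExpForm f K ℓ) (hK : K.IsSymm) (d : ι → ℝ)
    (T : Matrix ι κ ℝ) :
    HasQuadExpForm (fun z => f (d + T *ᵥ z)) (Tᵀ * K * T) (Tᵀ *ᵥ (ℓ - K *ᵥ d)) := by
  obtain ⟨C, hC, hf⟩ := hf
  refine ⟨C * quadExp K ℓ d, mul_pos hC (quadExp_pos _ _ _), fun z => ?_⟩
  simp only [hf, quadExp_add_mulVec hK, mul_assoc]

end HasQuadExpForm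

section GaussianDensity

variable {k l : ℕ}

theorem gaussPdf_eq_mul_quadExp (μ : Fin k → ℝ) (S : Matrix (Fin k) (Fin k) ℝ) (x : Fin k → ℝ) :
    gaussPdf μ S x = ((2 * π) ^ (k : ℝ) * S.det) ^ (-(1 : ℝ) / 2) * quadExp S⁻¹ 0 (x - μ) := by
  simp only [gaussPdf, quadExp, zero_dotProduct, add_zero]

theorem hasQuadExpForm_gaussPdf_add_mulVec {S : Matrix (Fin k) (Fin k) ℝ} (hS : S.PosDef)
    (c y : Fin k → ℝ) (B : Matrix (Fin k) (Fin l) ℝ) :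
    HasQuadExpForm (fun z => gaussPdf (c + B *ᵥ z) S y) (Bᵀ * S⁻¹ * B)
      ((Bᵀ * S⁻¹) *ᵥ (y - c)) := by
  have hS' : S⁻¹.IsSymm := isHermitian_iff_isSymm.mp hS.inv.isHermitian
  have hdet := hS.det_pos
  refine ⟨((2 * π) ^ (k : ℝ) * S.det) ^ (-(1 : ℝ) / 2) * quadExp S⁻¹ 0 (y - c),
    mul_pos (by positivity) (quadExp_pos _ _ _), fun z => ?_⟩
  have hresidual : y - (c + B *ᵥ z) = (y - c) + (-B) *ᵥ z := by
    rw [neg_mulVec]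
    abel
  dsimp only
  rw [gaussPdf_eq_mul_quadExp, hresidual, quadExp_add_mulVec hS', mul_assoc]
  simp only [transpose_neg, Matrix.neg_mul, Matrix.mul_neg, neg_neg, zero_sub, mulVec_neg,
    Matrix.neg_mulVec, mulVec_mulVec]

theorem HasQuadExpForm.integral_gaussPdf_mul {S Ω : Matrix (Fin k) (Fin k) ℝ} {ℓ : Fin k → ℝ}
    {f : (Fin k → ℝ) → ℝ} (hf : HasQuadExpForm f Ω ℓ) (hS : S.PosDef) (hΩ : Ω.PosSemidef) :
    HasQuadExpForm (fun μ => ∫ w, gaussPdf μ S w * f w)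
      (S⁻¹ * (S⁻¹ + Ω)⁻¹ * Ω) ((S⁻¹ * (S⁻¹ + Ω)⁻¹) *ᵥ ℓ) := by
  obtain ⟨C, hC, hf⟩ := hf
  have hS' : S⁻¹.IsSymm := isHermitian_iff_isSymm.mp hS.inv.isHermitian
  have hA : (S⁻¹ + Ω).PosDef := hS.inv.add_posSemidef hΩ
  have hdet := hS.det_pos
  set N := ((2 * π) ^ (k : ℝ) * S.det) ^ (-(1 : ℝ) / 2)
  refine ⟨N * C * Real.exp ((1 / 2 : ℝ) * (ℓ ⬝ᵥ (S⁻¹ + Ω)⁻¹ *ᵥ ℓ)) * ∫ w, quadExp (S⁻¹ + Ω) 0 w,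
    mul_pos (by positivity) (integral_quadExp_zero_pos hA), fun μ => ?_⟩
  have hintegrand (w : Fin k → ℝ) : gaussPdf μ S w * f w =
      N * C * (quadExp S⁻¹ 0 (w - μ) * quadExp Ω ℓ w) := by
    rw [gaussPdf_eq_mul_quadExp, hf]
    ring
  simp_rw [hintegrand]
  rw [integral_const_mul, integral_quadExp_sub_mul_quadExp hS' hA]
  ring

theorem HasQuadExpForm.integral_gaussPdf_add_mulVec_mul {S Ω : Matrix (Fin k) (Fin k) ℝ}
    {ℓ : Fin k → ℝ} {f : (Fin k → ℝ) → ℝ} (hf : HasQuadExpForm f Ω ℓ) (hS : S.PosDef)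
    (hΩ : Ω.PosSemidef) (d : Fin k → ℝ) (T : Matrix (Fin k) (Fin l) ℝ) :
    HasQuadExpForm (fun z => ∫ w, gaussPdf (d + T *ᵥ z) S w * f w)
      (Tᵀ * (S⁻¹ * (S⁻¹ + Ω)⁻¹) * Ω * T) (Tᵀ *ᵥ ((S⁻¹ * (S⁻¹ + Ω)⁻¹) *ᵥ (ℓ - Ω *ᵥ d))) := by
  have hsymm : (S⁻¹ * (S⁻¹ + Ω)⁻¹ * Ω).IsSymm :=
    isHermitian_iff_isSymm.mp (hS.inv.posSemidef_mul_inv_add_mul hΩ).isHermitian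
  simpa only [Matrix.mul_assoc, mulVec_sub, mulVec_mulVec] using
    (hf.integral_gaussPdf_mul hS hΩ).comp_add_mulVec hsymm d T

end GaussianDensity

theorem ffbsCoef_posSemidef_and_hasQuadExpForm {m p J : ℕ} (dv : Fin J → Fin m → ℝ)
    (T H : Fin J → Matrix (Fin m) (Fin m) ℝ) (cv : Fin J → Fin p → ℝ)
    (B : Fin J → Matrix (Fin p) (Fin m) ℝ) (G : Fin J → Matrix (Fin p) (Fin p) ℝ)
    (hH : ∀ j, IsUnit (H j).det) (hG : ∀ j, IsUnit (G j).det)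
    (a : ℕ → Fin J) (y : ℕ → Fin p → ℝ) (n k : ℕ) :
    (ffbsCoef dv T H cv B G a y n k).1.PosSemidef ∧
      HasQuadExpForm (backDens dv T H cv B G a y n k)
        (ffbsCoef dv T H cv B G a y n k).1 (ffbsCoef dv T H cv B G a y n k).2 := by
  have hGbar (j : Fin J) := posDef_mul_transpose_self (hG j)
  induction k with
  | zero =>
    exact ⟨(hGbar _).inv.posSemidef.transpose_mul_mul_same _,
      hasQuadExpForm_gaussPdf_add_mulVec (hGbar _) _ _ _⟩
  | succ k ih =>
    obtain ⟨hΩ, hψ⟩ := ih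
    set j := a (n - k)
    set u := n - (k + 1)
    have hHbar := posDef_mul_transpose_self (hH j)
    have hobs := hasQuadExpForm_gaussPdf_add_mulVec (hGbar (a u)) (cv (a u)) (y u) (B (a u))
    have htrans := hψ.integral_gaussPdf_add_mulVec_mul hHbar hΩ (dv j) (T j)
    have hpsd := (hHbar.inv.posSemidef_mul_inv_add_mul hΩ).transpose_mul_mul_same (T j)
    rw [← Matrix.mul_assoc, mul_transpose_inv_mul_inv_add_eq (hH j) hΩ] at hpsd
    rw [mul_transpose_inv_mul_inv_add_eq (hH j) hΩ] at htrans
    refine ⟨hpsd.add ((hGbar _).inv.posSemidef.transpose_mul_mul_same _), ?_⟩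
    have hψ' := hobs.mul htrans
    rw [add_comm _ ((T j)ᵀ * _ * _ * T j), add_comm _ ((T j)ᵀ *ᵥ _)] at hψ'
    exact hψ'

theorem ffbs_backward_gaussian_form_general {m p J : ℕ} (dv : Fin J → Fin m → ℝ)
    (T H : Fin J → Matrix (Fin m) (Fin m) ℝ) (cv : Fin J → Fin p → ℝ)
    (B : Fin J → Matrix (Fin p) (Fin m) ℝ) (G : Fin J → Matrix (Fin p) (Fin p) ℝ)
    (hH : ∀ j, IsUnit (H j).det) (hG : ∀ j, IsUnit (G j).det)
    (a : ℕ → Fin J) (y : ℕ → Fin p → ℝ) (i n : ℕ) :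
    ∀ u, i ≤ u → u ≤ n →
      ((ffbsCoef dv T H cv B G a y n (n - u)).1).PosSemidef ∧
      ∃ C : ℝ, 0 < C ∧ ∀ z : Fin m → ℝ,
        backDens dv T H cv B G a y n (n - u) z =
          C * Real.exp (-(1 / 2 : ℝ) *
              (z ⬝ᵥ ((ffbsCoef dv T H cv B G a y n (n - u)).1 *ᵥ z)) +
            (ffbsCoef dv T H cv B G a y n (n - u)).2 ⬝ᵥ z) :=
  fun u _ _ => ffbsCoef_posSemidef_and_hasQuadExpForm dv T H cv B G hH hG a y n (n - u)

/-- **Backward Gaussian form of the FFBS smoother.**  Each `Ω̂_u` is positive semidefinite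
and for every `i ≤ u ≤ n` there is `C_u > 0` with `ψ_u(z) = C_u exp(−½ z'Ω̂_u z + λ̂_u'z)`. -/
theorem ffbs_backward_gaussian_form {m p J : ℕ} (dv : Fin J → Fin m → ℝ)
    (T H : Fin J → Matrix (Fin m) (Fin m) ℝ) (cv : Fin J → Fin p → ℝ)
    (B : Fin J → Matrix (Fin p) (Fin m) ℝ) (G : Fin J → Matrix (Fin p) (Fin p) ℝ)
    (hH : ∀ j, IsUnit (H j).det) (hG : ∀ j, IsUnit (G j).det)
    (a : ℕ → Fin J) (y : ℕ → Fin p → ℝ) (i n : ℕ) (hi : 1 ≤ i) (hin : i ≤ n) :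
    ∀ u, i ≤ u → u ≤ n →
      ((ffbsCoef dv T H cv B G a y n (n - u)).1).PosSemidef ∧
      ∃ C : ℝ, 0 < C ∧ ∀ z : Fin m → ℝ,
        backDens dv T H cv B G a y n (n - u) z =
          C * Real.exp (-(1 / 2 : ℝ) *
              (z ⬝ᵥ ((ffbsCoef dv T H cv B G a y n (n - u)).1 *ᵥ z)) +
            (ffbsCoef dv T H cv B G a y n (n - u)).2 ⬝ᵥ z) :=
  ffbs_backward_gaussian_form_general dv T H cv B G hH hG a y i n
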